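/- (DRO representation for Group-Lasso logistic regression.) Let (X_1,Y_1),…,(X_n,Y_n) ∈ ℝ^d × {−1, 1}, let P_n be their empirical measure, let q, t ∈ [1,∞] with conjugates p, s (1/p + 1/q = 1, 1/s + 1/t = 1), let α ∈ ℝ^d̄ have strictly positive entries, and let c be the cost function c((x,y),(x',y')) = ‖x − x'‖_{α⁻¹-(q,t)} if y = y' and +∞ otherwise. Then for every δ > 0, min over β ∈ ℝ^d of sup { E_P[log(1 + exp(−Y·βᵀX))] : P a probability measure on ℝ^{d+1} with D_c(P, P_n) ≤ δ } equals min over β ∈ ℝ^d of E_{P_n}[log(1 + exp(−Y·βᵀX))] + δ·‖β‖_{α-(p,s)}. -/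

import Mathlib

open scoped ENNReal BigOperators
open MeasureTheory Filter

/-- The l_p norm (p ∈ [1,∞], with sup modification at p = ∞) of a finite real vector. -/
noncomputable def lpn (p : ℝ≥0∞) {ι : Type} [Fintype ι] (x : ι → ℝ) : ℝ :=
  ‖(WithLp.equiv p (ι → ℝ)).symm x‖

/-- The α-(p,s) groupwise norm: ‖x‖ = ( Σ_i α_i^s ‖x(G_i)‖_p^s )^{1/s}. -/
noncomputable def gnorm {d dbar : ℕ} (G : Fin dbar → Finset (Fin d)) (α : Fin dbar → ℝ)
    (p s : ℝ≥0∞) (x : Fin d → ℝ) : ℝ :=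
  lpn s (fun i => α i * lpn p (fun j : {k // k ∈ G i} => x j.1))

/-- G_1, …, G_d̄ form a partition of {1,…,d} into nonempty disjoint groups. -/
def IsPartition {d dbar : ℕ} (G : Fin dbar → Finset (Fin d)) : Prop :=
  (∀ i, (G i).Nonempty) ∧ (∀ i j, i ≠ j → Disjoint (G i) (G j)) ∧ (∀ k, ∃ i, k ∈ G i)

/-- Optimal transport discrepancy with cost `c`: the Kantorovich infimum over couplings of
`P` and `Q`. -/
noncomputable def Dc {E : Type} [MeasurableSpace E] (c : E → E → ℝ≥0∞)
    (P Q : Measure E) : ℝ≥0∞ :=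
  ⨅ (π : Measure (E × E)) (_ : π.map Prod.fst = P) (_ : π.map Prod.snd = Q),
    ∫⁻ z, c z.1 z.2 ∂π

open Topology

/-! For fixed `β` both sides agree.

Upper bound: `u ↦ log (1 + exp u)` is 1-Lipschitz and, by Hölder's inequality applied within
and then across the groups, `|βᵀx| ≤ ‖β‖_{α-(p,s)} ‖x‖_{α⁻¹-(q,t)}`. Hence the loss at `u`
exceeds the loss at `w` by at most `‖β‖_{α-(p,s)} c(u, w)` (the cost is infinite across labels),
and integrating against a coupling of `P` and `P_n` bounds `E_P[loss]` by
`E_{P_n}[loss] + ‖β‖ D_c(P, P_n)`.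

Lower bound: take `v` with `‖v‖_{α⁻¹-(q,t)} ≤ 1` and `βᵀv = ‖β‖_{α-(p,s)}` (the equality case
of Hölder), and move a fraction `θ` of the mass of `P_n` by `δ / θ` in the direction `-y v`.
This costs at most `δ`, and since `log (1 + exp u) ≥ u` the new expected loss is at least
`E_{P_n}[loss] + δ ‖β‖ - θ (E_{P_n}[loss] + E_{P_n}|yβᵀx|)`; now let `θ → 0`.
-/

section lpn
variable {ι : Type} [Fintype ι] {p q : ℝ≥0∞}

lemma lpn_eq_norm_lp [Fact (1 ≤ p)] (x : ι → ℝ) :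
    lpn p x = ‖(lpPiLpₗᵢ (fun _ : ι => ℝ) ℝ).symm (WithLp.toLp p x)‖ :=
  ((lpPiLpₗᵢ (fun _ : ι => ℝ) ℝ).symm.norm_map _).symm

lemma lpn_nonneg [Fact (1 ≤ p)] (x : ι → ℝ) : 0 ≤ lpn p x := norm_nonneg _

lemma lpn_smul [Fact (1 ≤ p)] (c : ℝ) (x : ι → ℝ) : lpn p (c • x) = |c| * lpn p x :=
  norm_smul c (WithLp.toLp p x)

lemma lpn_le_lpn [Fact (1 ≤ p)] {x y : ι → ℝ} (h : ∀ i, |x i| ≤ |y i|) :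
    lpn p x ≤ lpn p y := by
  rw [lpn_eq_norm_lp, lpn_eq_norm_lp]
  exact lp.norm_mono (zero_lt_one.trans_le Fact.out).ne' (by simpa [coe_lpPiLpₗᵢ_symm] using h)

lemma lpn_top_eq_norm (x : ι → ℝ) : lpn ∞ x = ‖x‖ := PiLp.norm_toLp x

lemma lpn_one_eq_sum (x : ι → ℝ) : lpn 1 x = ∑ i, |x i| := PiLp.norm_eq_of_L1 _

lemma abs_sum_mul_le_lpn_mul_lpn [hpq : p.HolderConjugate q] (b c : ι → ℝ) :
    |∑ i, b i * c i| ≤ lpn p b * lpn q c := by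
  have : Fact (1 ≤ p) := ⟨hpq.one_le⟩
  have : Fact (1 ≤ q) := ⟨hpq.symm.one_le⟩
  have hB : ∀ _ : ι, ‖ContinuousLinearMap.mul ℝ ℝ‖ ≤ (1 : NNReal) := fun _ => by simp
  simpa [lp.dualPairing_apply, tsum_fintype, coe_lpPiLpₗᵢ_symm, lpn] using
    (lp.dualPairing p q _ hB).le_of_opNorm₂_le_of_le (lp.norm_dualPairing _ hB)
      (le_refl ‖(lpPiLpₗᵢ (fun _ : ι => ℝ) ℝ (p := p)).symm (WithLp.toLp p b)‖)
      (le_refl ‖(lpPiLpₗᵢ (fun _ : ι => ℝ) ℝ (p := q)).symm (WithLp.toLp q c)‖)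

lemma abs_sign_le_one (x : ℝ) : |(SignType.sign x : ℝ)| ≤ 1 := by
  rcases lt_trichotomy x 0 with hx | rfl | hx <;> simp [*]

lemma exists_dual_vector_lpn_top (b : ι → ℝ) (hb : b ≠ 0) :
    ∃ u : ι → ℝ, lpn 1 u ≤ 1 ∧ lpn ∞ b ≤ ∑ i, b i * u i := by
  classical
  have : Nonempty ι := (Function.ne_iff.1 hb).nonempty
  obtain ⟨i₀, hi₀⟩ := (IsGreatest.pi_norm b).1
  refine ⟨Pi.single i₀ (SignType.sign (b i₀)), ?_, ?_⟩
  · rw [lpn, WithLp.equiv_symm_apply, ← PiLp.single, PiLp.norm_single]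
    exact abs_sign_le_one _
  · simp [lpn_top_eq_norm, ← hi₀, Pi.single_apply]

lemma exists_dual_vector_lpn_one (b : ι → ℝ) :
    ∃ u : ι → ℝ, lpn ∞ u ≤ 1 ∧ lpn 1 b ≤ ∑ i, b i * u i := by
  refine ⟨fun i => SignType.sign (b i), ?_, by simp [lpn_one_eq_sum]⟩
  rw [lpn_top_eq_norm, pi_norm_le_iff_of_nonneg zero_le_one]
  exact fun i => abs_sign_le_one _

lemma exists_dual_vector_lpn_of_ne_top [hpq : p.HolderConjugate q] (hp : p ≠ ∞) (hq : q ≠ ∞)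
    (b : ι → ℝ) (hb : b ≠ 0) : ∃ u : ι → ℝ, lpn q u ≤ 1 ∧ lpn p b ≤ ∑ i, b i * u i := by
  have : Fact (1 ≤ p) := ⟨hpq.one_le⟩
  have hr := hpq.toReal_of_ne_top hp hq
  set B := lpn p b
  have hB : 0 < B := by simpa [B, lpn] using hb
  set a : ι → ℝ := fun i => |b i| / B
  have ha0 : ∀ i, 0 ≤ a i := fun i => by positivity
  have ha : ∑ i, a i ^ p.toReal = 1 := by
    have hBp : B ^ p.toReal = ∑ i, |b i| ^ p.toReal := by
      simp only [B, lpn, WithLp.equiv_symm_apply, PiLp.norm_eq_sum hr.pos,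
        Real.norm_eq_abs, one_div]
      exact Real.rpow_inv_rpow (by positivity) hr.pos.ne'
    simp only [a, Real.div_rpow (abs_nonneg _) hB.le, ← Finset.sum_div, ← hBp]
    exact div_self (by positivity)
  refine ⟨fun i => SignType.sign (b i) * a i ^ (p.toReal - 1), ?_, ?_⟩
  · have hu : ∀ i, |SignType.sign (b i) * a i ^ (p.toReal - 1)| ^ q.toReal ≤ a i ^ p.toReal :=
      fun i => calc
        _ ≤ (a i ^ (p.toReal - 1)) ^ q.toReal := by
          gcongr
          rw [abs_mul, abs_of_nonneg (by positivity : 0 ≤ a i ^ (p.toReal - 1))]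
          exact mul_le_of_le_one_left (by positivity) (abs_sign_le_one _)
        _ = a i ^ p.toReal := by rw [← Real.rpow_mul (ha0 i), hr.sub_one_mul_conj]
    rw [lpn, WithLp.equiv_symm_apply, PiLp.norm_eq_sum hr.symm.pos]
    refine Real.rpow_le_one (by positivity) ?_ (by positivity)
    simpa [ha] using Finset.sum_le_sum fun i (_ : i ∈ Finset.univ) => hu i
  · have hterm : ∀ i, b i * (SignType.sign (b i) * a i ^ (p.toReal - 1)) = B * a i ^ p.toReal := by
      intro i
      have hbi : |b i| = B * a i := by simp [a, mul_div_cancel₀, hB.ne']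
      have hai : a i ^ p.toReal = a i ^ (p.toReal - 1) * a i := by
        rw [← Real.rpow_add_one' (ha0 i) (by simp [hr.pos.ne']), sub_add_cancel]
      rw [← mul_assoc, self_mul_sign, hbi, hai]
      ring
    simp [hterm, ← Finset.mul_sum, ha]

lemma exists_dual_vector_lpn [hpq : p.HolderConjugate q] (b : ι → ℝ) :
    ∃ u : ι → ℝ, lpn q u ≤ 1 ∧ lpn p b ≤ ∑ i, b i * u i := by
  have : Fact (1 ≤ p) := ⟨hpq.one_le⟩
  have : Fact (1 ≤ q) := ⟨hpq.symm.one_le⟩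
  rcases eq_or_ne b 0 with rfl | hb
  · exact ⟨0, by simp [lpn], by simp [lpn]⟩
  rcases eq_or_ne p ∞ with rfl | hp
  · obtain rfl : q = 1 := (ENNReal.HolderConjugate.eq_top_iff_eq_one ∞ q).1 rfl
    exact exists_dual_vector_lpn_top b hb
  rcases eq_or_ne q ∞ with rfl | hq
  · obtain rfl : p = 1 := (ENNReal.HolderConjugate.eq_top_iff_eq_one ∞ p).1 rfl
    exact exists_dual_vector_lpn_one b
  exact exists_dual_vector_lpn_of_ne_top hp hq b hb

end lpn

section gnorm
variable {d dbar : ℕ} {G : Fin dbar → Finset (Fin d)} {α : Fin dbar → ℝ} {p q s t : ℝ≥0∞}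

lemma IsPartition.sum_eq_sum_sum (hG : IsPartition G) (f : Fin d → ℝ) :
    ∑ k, f k = ∑ i, ∑ j : {k // k ∈ G i}, f j.1 := by
  classical
  have hcover : Finset.univ.biUnion G = Finset.univ :=
    Finset.eq_univ_of_forall fun k => Finset.mem_biUnion.2 <| by simpa using hG.2.2 k
  rw [← hcover, Finset.sum_biUnion fun i _ j _ hij => hG.2.1 i j hij]
  exact Finset.sum_congr rfl fun i _ => (Finset.sum_coe_sort (G i) f).symm

lemma IsPartition.eq_of_mem (hG : IsPartition G) {i j : Fin dbar} {k : Fin d}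
    (hi : k ∈ G i) (hj : k ∈ G j) : i = j := by
  by_contra hij
  exact Finset.disjoint_left.1 (hG.2.1 i j hij) hi hj

lemma gnorm_nonneg [Fact (1 ≤ s)] (x : Fin d → ℝ) : 0 ≤ gnorm G α p s x := lpn_nonneg _

lemma gnorm_smul [Fact (1 ≤ p)] [Fact (1 ≤ s)] (c : ℝ) (x : Fin d → ℝ) :
    gnorm G α p s (c • x) = |c| * gnorm G α p s x := by
  have h : ∀ i, α i * lpn p (fun j : {k // k ∈ G i} => (c • x) j.1)
      = |c| * (α i * lpn p (fun j : {k // k ∈ G i} => x j.1)) := fun i => by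
    rw [show (fun j : {k // k ∈ G i} => (c • x) j.1) = c • fun j => x j.1 from rfl, lpn_smul]
    ring
  calc gnorm G α p s (c • x)
      = lpn s (|c| • fun i => α i * lpn p (fun j : {k // k ∈ G i} => x j.1)) :=
        congrArg (lpn s) (funext h)
    _ = _ := by rw [lpn_smul, abs_abs, gnorm]

lemma abs_sum_mul_le_gnorm_mul_gnorm [p.HolderConjugate q] [s.HolderConjugate t]
    (hG : IsPartition G) (hα : ∀ i, 0 < α i) (β x : Fin d → ℝ) :
    |∑ k, β k * x k| ≤ gnorm G α p s β * gnorm G (fun i => (α i)⁻¹) q t x := by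
  rw [hG.sum_eq_sum_sum]
  calc |∑ i, ∑ j : {k // k ∈ G i}, β j.1 * x j.1|
      ≤ ∑ i, (α i * lpn p (fun j : {k // k ∈ G i} => β j.1)) *
          ((α i)⁻¹ * lpn q (fun j : {k // k ∈ G i} => x j.1)) := by
        refine (Finset.abs_sum_le_sum_abs _ _).trans (Finset.sum_le_sum fun i _ => ?_)
        rw [mul_mul_mul_comm, mul_inv_cancel₀ (hα i).ne', one_mul]
        exact abs_sum_mul_le_lpn_mul_lpn _ _
    _ ≤ _ := (le_abs_self _).trans (abs_sum_mul_le_lpn_mul_lpn _ _)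

lemma exists_dual_vector_gnorm [hpq : p.HolderConjugate q] [hst : s.HolderConjugate t]
    (hG : IsPartition G) (hα : ∀ i, 0 < α i) (β : Fin d → ℝ) :
    ∃ v : Fin d → ℝ, gnorm G (fun i => (α i)⁻¹) q t v ≤ 1 ∧
      gnorm G α p s β ≤ ∑ k, β k * v k := by
  have : Fact (1 ≤ p) := ⟨hpq.one_le⟩
  have : Fact (1 ≤ q) := ⟨hpq.symm.one_le⟩
  have : Fact (1 ≤ t) := ⟨hst.symm.one_le⟩
  set b : Fin dbar → ℝ := fun i => α i * lpn p (fun j : {k // k ∈ G i} => β j.1)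
  obtain ⟨u, hu, hbu⟩ := exists_dual_vector_lpn (p := s) (q := t) b
  choose w hw hβw using fun i => exists_dual_vector_lpn (p := p) (q := q)
    (fun j : {k // k ∈ G i} => β j.1)
  choose group hgroup using hG.2.2
  set v : Fin d → ℝ := fun k => α (group k) * |u (group k)| * w (group k) ⟨k, hgroup k⟩
  have hv : ∀ i, (fun j : {k // k ∈ G i} => v j.1) = (α i * |u i|) • w i := by
    intro i
    funext ⟨k, hk⟩
    have key : ∀ i' (hk' : k ∈ G i'), i' = i →
        α i' * |u i'| * w i' ⟨k, hk'⟩ = α i * |u i| * w i ⟨k, hk⟩ := by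
      rintro i' hk' rfl
      rfl
    exact key _ _ (hG.eq_of_mem (hgroup k) hk)
  refine ⟨v, ?_, ?_⟩
  · refine le_trans (lpn_le_lpn fun i => ?_) hu
    dsimp only
    rw [hv, lpn_smul, abs_of_nonneg (mul_nonneg (hα i).le (abs_nonneg _)), mul_assoc,
      inv_mul_cancel_left₀ (hα i).ne', abs_mul, abs_abs, abs_of_nonneg (lpn_nonneg _)]
    exact mul_le_of_le_one_right (abs_nonneg _) (hw i)
  · have hb : ∀ i, 0 ≤ b i := fun i => mul_nonneg (hα i).le (lpn_nonneg _)
    calc gnorm G α p s β = lpn s b := rfl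
      _ ≤ ∑ i, b i * u i := hbu
      _ ≤ ∑ i, α i * |u i| * ∑ j : {k // k ∈ G i}, β j.1 * w i j := by
        refine Finset.sum_le_sum fun i _ => ?_
        calc b i * u i ≤ b i * |u i| := mul_le_mul_of_nonneg_left (le_abs_self _) (hb i)
          _ = α i * |u i| * lpn p (fun j : {k // k ∈ G i} => β j.1) := by ring
          _ ≤ _ := mul_le_mul_of_nonneg_left (hβw i) (mul_nonneg (hα i).le (abs_nonneg _))
      _ = ∑ k, β k * v k := by
        rw [hG.sum_eq_sum_sum]
        refine Finset.sum_congr rfl fun i _ => ?_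
        simp only [congrFun (hv i), Pi.smul_apply, smul_eq_mul, Finset.mul_sum]
        exact Finset.sum_congr rfl fun j _ => by ring

end gnorm

lemma ENNReal.le_of_forall_le_add_ofReal_mul {a b D : ℝ≥0∞} (hD : D ≠ ⊤)
    (h : ∀ θ : ℝ, 0 < θ → θ ≤ 1 → b ≤ a + ENNReal.ofReal θ * D) : b ≤ a := by
  have hlim : Tendsto (fun θ : ℝ => a + ENNReal.ofReal θ * D) (𝓝[>] 0) (𝓝 a) := by
    have hθ : Tendsto ENNReal.ofReal (𝓝[>] 0) (𝓝 0) := by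
      simpa using (ENNReal.continuous_ofReal.tendsto 0).mono_left nhdsWithin_le_nhds
    simpa using (ENNReal.Tendsto.mul_const hθ (Or.inr hD)).const_add a
  refine ge_of_tendsto hlim ?_
  filter_upwards [Ioc_mem_nhdsGT zero_lt_one] with θ hθ using h θ hθ.1 hθ.2

section Transport
variable {E : Type} [MeasurableSpace E] {c : E → E → ℝ≥0∞} {P Q : Measure E}

lemma Dc_le_lintegral {π : Measure (E × E)} (h₁ : π.map Prod.fst = P) (h₂ : π.map Prod.snd = Q) :
    Dc c P Q ≤ ∫⁻ z, c z.1 z.2 ∂π :=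
  (iInf_le _ π).trans <| (iInf_le _ h₁).trans (iInf_le _ h₂)

lemma lintegral_le_lintegral_add_mul_Dc {f : E → ℝ≥0∞} (hf : Measurable f) {K : ℝ≥0∞}
    (hK : K ≠ ⊤) (hfc : ∀ᵐ w ∂Q, ∀ u, f u ≤ f w + K * c u w) (hD : Dc c P Q ≠ ⊤) :
    ∫⁻ u, f u ∂P ≤ ∫⁻ w, f w ∂Q + K * Dc c P Q := by
  have hπ : ∀ π : Measure (E × E), π.map Prod.fst = P → π.map Prod.snd = Q →
      ∫⁻ u, f u ∂P ≤ ∫⁻ w, f w ∂Q + K * ∫⁻ z, c z.1 z.2 ∂π := by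
    intro π h₁ h₂
    have hae : ∀ᵐ z ∂π, f z.1 ≤ f z.2 + K * c z.1 z.2 :=
      (ae_of_ae_map measurable_snd.aemeasurable (h₂ ▸ hfc)).mono fun z hz => hz z.1
    calc ∫⁻ u, f u ∂P = ∫⁻ z, f z.1 ∂π := by rw [← h₁, lintegral_map hf measurable_fst]
      _ ≤ ∫⁻ z, f z.2 + K * c z.1 z.2 ∂π := lintegral_mono_ae hae
      _ = ∫⁻ w, f w ∂Q + K * ∫⁻ z, c z.1 z.2 ∂π := by
        rw [lintegral_add_left (f := fun z : E × E => f z.2) (hf.comp measurable_snd),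
          lintegral_const_mul' _ _ hK, ← h₂, lintegral_map hf measurable_snd]
  rcases eq_or_ne K 0 with rfl | hK₀
  · obtain ⟨π, h₁, h₂, -⟩ : ∃ π : Measure (E × E), ∃ (_ : π.map Prod.fst = P)
        (_ : π.map Prod.snd = Q), ∫⁻ z, c z.1 z.2 ∂π < ⊤ := by
      simpa only [Dc, iInf_lt_iff] using hD.lt_top
    simpa using hπ π h₁ h₂
  · simp only [Dc, ENNReal.mul_iInf_of_ne hK₀ hK, ENNReal.add_iInf]
    exact le_iInf fun π => le_iInf fun h₁ => le_iInf fun h₂ => hπ π h₁ h₂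

lemma Dc_mix_map_le (hc : ∀ z, c z z = 0) {T : E → E} (hT : Measurable T) {θ : ℝ≥0∞}
    (hθ : θ ≤ 1) : Dc c ((1 - θ) • Q + θ • Q.map T) Q ≤ θ * ∫⁻ z, c (T z) z ∂Q := by
  have hdiag : Measurable fun z : E => (z, z) := measurable_id.prodMk measurable_id
  have hgraph : Measurable fun z : E => (T z, z) := hT.prodMk measurable_id
  set π := (1 - θ) • Q.map (fun z => (z, z)) + θ • Q.map (fun z => (T z, z))
  have h₁ : π.map Prod.fst = (1 - θ) • Q + θ • Q.map T := by
    simp only [π, Measure.map_add _ _ measurable_fst, Measure.map_smul,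
      Measure.map_map measurable_fst hdiag, Measure.map_map measurable_fst hgraph,
      Function.comp_def, Measure.map_id']
  have h₂ : π.map Prod.snd = Q := by
    simp only [π, Measure.map_add _ _ measurable_snd, Measure.map_smul,
      Measure.map_map measurable_snd hdiag, Measure.map_map measurable_snd hgraph,
      Function.comp_def, Measure.map_id']
    rw [← add_smul, tsub_add_cancel_of_le hθ, one_smul]
  refine (Dc_le_lintegral h₁ h₂).trans ?_
  simp only [π, lintegral_add_measure, lintegral_smul_measure]
  calc (1 - θ) * ∫⁻ z, c z.1 z.2 ∂Q.map (fun z => (z, z))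
        + θ * ∫⁻ z, c z.1 z.2 ∂Q.map (fun z => (T z, z))
      ≤ (1 - θ) * ∫⁻ z, c z z ∂Q + θ * ∫⁻ z, c (T z) z ∂Q := by
        gcongr <;> exact lintegral_map_le _ _
    _ = θ * ∫⁻ z, c (T z) z ∂Q := by simp [hc]

end Transport

section LabelCost
variable {ι : Type} {N : (ι → ℝ) → ℝ}

noncomputable def labelCost (N : (ι → ℝ) → ℝ) (u w : (ι → ℝ) × ℝ) : ℝ≥0∞ :=
  if u.2 = w.2 then ENNReal.ofReal (N (u.1 - w.1)) else ⊤

noncomputable def adversarialShift (v : ι → ℝ) (M : ℝ) (z : (ι → ℝ) × ℝ) : (ι → ℝ) × ℝ :=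
  (z.1 - (M * z.2) • v, z.2)

variable {v : ι → ℝ} {M : ℝ} {z : (ι → ℝ) × ℝ}

lemma labelCost_self (hN : ∀ (c : ℝ) x, N (c • x) = |c| * N x) (z : (ι → ℝ) × ℝ) :
    labelCost N z z = 0 := by
  simp [labelCost, show N 0 = 0 by simpa using hN 0 0]

lemma labelCost_adversarialShift_le (hN : ∀ (c : ℝ) x, N (c • x) = |c| * N x) (hv : N v ≤ 1)
    (hM : 0 ≤ M) (hz : z.2 = 1 ∨ z.2 = -1) :
    labelCost N (adversarialShift v M z) z ≤ ENNReal.ofReal M := by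
  have hz₁ : |z.2| = 1 := by rcases hz with h | h <;> simp [h]
  have : z.1 - (M * z.2) • v - z.1 = (-(M * z.2)) • v := by simp [neg_smul]
  simp only [labelCost, adversarialShift, if_true]
  rw [this, hN, abs_neg, abs_mul, abs_of_nonneg hM, hz₁, mul_one]
  exact ENNReal.ofReal_le_ofReal (mul_le_of_le_one_right hM hv)

lemma measurable_adversarialShift (v : ι → ℝ) (M : ℝ) : Measurable (adversarialShift v M) := by
  unfold adversarialShift
  fun_prop

lemma Dc_labelCost_mix_adversarialShift_le (hN : ∀ (c : ℝ) x, N (c • x) = |c| * N x)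
    (hv : N v ≤ 1) {Q : Measure ((ι → ℝ) × ℝ)} [IsProbabilityMeasure Q]
    (hQ : ∀ᵐ w ∂Q, w.2 = 1 ∨ w.2 = -1) (hM : 0 ≤ M) {t : ℝ≥0∞} (ht : t ≤ 1) :
    Dc (labelCost N) ((1 - t) • Q + t • Q.map (adversarialShift v M)) Q ≤
      t * ENNReal.ofReal M := by
  refine (Dc_mix_map_le (labelCost_self hN) (measurable_adversarialShift v M) ht).trans ?_
  gcongr
  calc ∫⁻ z, labelCost N (adversarialShift v M z) z ∂Q ≤ ∫⁻ _, ENNReal.ofReal M ∂Q :=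
        lintegral_mono_ae (hQ.mono fun z hz => labelCost_adversarialShift_le hN hv hM hz)
    _ = ENNReal.ofReal M := by simp

end LabelCost

section MarginLoss
variable {ι : Type} [Fintype ι] {φ : ℝ → ℝ} {β : ι → ℝ} {N : (ι → ℝ) → ℝ} {K δ : ℝ}

noncomputable def marginLoss (φ : ℝ → ℝ) (β : ι → ℝ) (z : (ι → ℝ) × ℝ) : ℝ≥0∞ :=
  ENNReal.ofReal (φ (-z.2 * ∑ k, β k * z.1 k))

lemma measurable_marginLoss (hφ : Measurable φ) : Measurable (marginLoss φ β) := by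
  unfold marginLoss
  fun_prop

lemma marginLoss_le_add_mul_labelCost (hφ : LipschitzWith 1 φ) (hK₀ : 0 ≤ K)
    (hK : ∀ x, |∑ k, β k * x k| ≤ K * N x) {w : (ι → ℝ) × ℝ} (hw : w.2 = 1 ∨ w.2 = -1)
    (u : (ι → ℝ) × ℝ) :
    marginLoss φ β u ≤ marginLoss φ β w + ENNReal.ofReal K * labelCost N u w := by
  unfold labelCost
  split_ifs with hy
  · set a := -u.2 * ∑ k, β k * u.1 k
    set b := -w.2 * ∑ k, β k * w.1 k
    have hab : |a - b| ≤ K * N (u.1 - w.1) := by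
      have : a - b = -w.2 * ∑ k, β k * (u.1 - w.1) k := by
        simp only [a, b, hy, Pi.sub_apply, mul_sub, Finset.sum_sub_distrib]
      have hw₁ : |w.2| = 1 := by rcases hw with h | h <;> simp [h]
      rw [this, abs_mul, abs_neg, hw₁, one_mul]
      exact hK _
    have hφab : φ a ≤ φ b + |a - b| := by simpa [Real.dist_eq] using hφ.le_add_mul a b
    calc marginLoss φ β u ≤ ENNReal.ofReal (φ b + K * N (u.1 - w.1)) :=
          ENNReal.ofReal_le_ofReal (by linarith)
      _ ≤ _ := by rw [← ENNReal.ofReal_mul hK₀]; exact ENNReal.ofReal_add_le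
  · rcases hK₀.eq_or_lt with rfl | hK
    · have h0 : ∀ x : ι → ℝ, ∑ k, β k * x k = 0 := fun x =>
        abs_nonpos_iff.1 (by simpa using hK x)
      simp [marginLoss, h0]
    · simp [ENNReal.mul_top, hK]

lemma lintegral_marginLoss_le_of_Dc_le (hφ : LipschitzWith 1 φ) (hK₀ : 0 ≤ K)
    (hK : ∀ x, |∑ k, β k * x k| ≤ K * N x) {P Q : Measure ((ι → ℝ) × ℝ)}
    (hQ : ∀ᵐ w ∂Q, w.2 = 1 ∨ w.2 = -1)
    (hP : Dc (labelCost N) P Q ≤ ENNReal.ofReal δ) :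
    ∫⁻ z, marginLoss φ β z ∂P ≤ ∫⁻ z, marginLoss φ β z ∂Q + ENNReal.ofReal (δ * K) :=
  calc ∫⁻ z, marginLoss φ β z ∂P
      ≤ ∫⁻ z, marginLoss φ β z ∂Q + ENNReal.ofReal K * Dc (labelCost N) P Q :=
        lintegral_le_lintegral_add_mul_Dc (measurable_marginLoss hφ.continuous.measurable)
          ENNReal.ofReal_ne_top
          (hQ.mono fun _ hw => marginLoss_le_add_mul_labelCost hφ hK₀ hK hw)
          (ne_top_of_le_ne_top ENNReal.ofReal_ne_top hP)
    _ ≤ _ := by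
      rw [mul_comm δ, ENNReal.ofReal_mul hK₀]
      gcongr

variable {v : ι → ℝ} {M : ℝ} {z : (ι → ℝ) × ℝ}

lemma ofReal_mul_le_marginLoss_adversarialShift (hφ : ∀ u, u ≤ φ u)
    (hKv : K ≤ ∑ k, β k * v k) (hM : 0 ≤ M) (hz : z.2 = 1 ∨ z.2 = -1) :
    ENNReal.ofReal (M * K) ≤
      marginLoss φ β (adversarialShift v M z) + ENNReal.ofReal |-z.2 * ∑ k, β k * z.1 k| := by
  set a := -z.2 * ∑ k, β k * z.1 k
  have hz₂ : z.2 * z.2 = 1 := by rcases hz with h | h <;> simp [h]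
  have hshift : -(adversarialShift v M z).2 * ∑ k, β k * (adversarialShift v M z).1 k
      = a + M * ∑ k, β k * v k := by
    have hv : ∑ k, β k * (M * z.2 * v k) = M * z.2 * ∑ k, β k * v k := by
      rw [Finset.mul_sum]
      exact Finset.sum_congr rfl fun _ _ => by ring
    simp only [a, adversarialShift, Pi.sub_apply, Pi.smul_apply, smul_eq_mul, mul_sub,
      Finset.sum_sub_distrib, hv]
    linear_combination (M * ∑ k, β k * v k) * hz₂
  rw [marginLoss]
  refine le_trans (ENNReal.ofReal_le_ofReal ?_) ENNReal.ofReal_add_le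
  calc M * K ≤ a + M * ∑ k, β k * v k + |a| := by
        linarith [neg_abs_le a, mul_le_mul_of_nonneg_left hKv hM]
    _ ≤ _ := by rw [← hshift]; gcongr; exact hφ _

lemma le_iSup_lintegral_marginLoss (hφm : Measurable φ) (hφ : ∀ u, u ≤ φ u)
    (hN : ∀ (c : ℝ) x, N (c • x) = |c| * N x) (hv : N v ≤ 1) (hKv : K ≤ ∑ k, β k * v k)
    {Q : Measure ((ι → ℝ) × ℝ)} [IsProbabilityMeasure Q] (hQ : ∀ᵐ w ∂Q, w.2 = 1 ∨ w.2 = -1)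
    (hE : ∫⁻ z, marginLoss φ β z ∂Q ≠ ⊤)
    (hC : ∫⁻ z, ENNReal.ofReal |-z.2 * ∑ k, β k * z.1 k| ∂Q ≠ ⊤) (hδ : 0 ≤ δ) :
    ∫⁻ z, marginLoss φ β z ∂Q + ENNReal.ofReal (δ * K) ≤
      ⨆ (P : Measure ((ι → ℝ) × ℝ)) (_ : IsProbabilityMeasure P)
        (_ : Dc (labelCost N) P Q ≤ ENNReal.ofReal δ), ∫⁻ z, marginLoss φ β z ∂P := by
  set E := ∫⁻ z, marginLoss φ β z ∂Q
  set C := ∫⁻ z, ENNReal.ofReal |-z.2 * ∑ k, β k * z.1 k| ∂Q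
  have hℓ := measurable_marginLoss (β := β) hφm
  refine ENNReal.le_of_forall_le_add_ofReal_mul (ENNReal.add_ne_top.2 ⟨hE, hC⟩)
    fun θ hθ hθ₁ => ?_
  set t := ENNReal.ofReal θ
  have ht : t ≤ 1 := ENNReal.ofReal_le_one.2 hθ₁
  set M := δ / θ
  have hM : 0 ≤ M := div_nonneg hδ hθ.le
  have hT := measurable_adversarialShift v M
  -- move the fraction `θ` of the mass a distance `δ / θ` against its label
  set P := (1 - t) • Q + t • Q.map (adversarialShift v M)
  have hP : IsProbabilityMeasure P := by
    constructor
    simp [P, Measure.map_apply hT MeasurableSet.univ, tsub_add_cancel_of_le ht]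
  have hPδ : Dc (labelCost N) P Q ≤ ENNReal.ofReal δ :=
    (Dc_labelCost_mix_adversarialShift_le hN hv hQ hM ht).trans_eq <| by
      rw [← ENNReal.ofReal_mul hθ.le, mul_div_cancel₀ _ hθ.ne']
  have hshift : ENNReal.ofReal (δ * K) ≤
      t * ∫⁻ z, marginLoss φ β (adversarialShift v M z) ∂Q + t * C :=
    calc ENNReal.ofReal (δ * K) = t * ENNReal.ofReal (M * K) := by
          rw [← ENNReal.ofReal_mul hθ.le, ← mul_assoc, mul_div_cancel₀ _ hθ.ne']
      _ ≤ t * ∫⁻ z, marginLoss φ β (adversarialShift v M z)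
            + ENNReal.ofReal |-z.2 * ∑ k, β k * z.1 k| ∂Q := by
          gcongr
          refine le_trans (by simp) (lintegral_mono_ae (hQ.mono fun z hz =>
            ofReal_mul_le_marginLoss_adversarialShift hφ hKv hM hz))
      _ = _ := by
          rw [lintegral_add_left (f := fun z => marginLoss φ β (adversarialShift v M z))
            (hℓ.comp hT), mul_add]
  have hPE : ∫⁻ z, marginLoss φ β z ∂P
      = (1 - t) * E + t * ∫⁻ z, marginLoss φ β (adversarialShift v M z) ∂Q := by
    rw [lintegral_add_measure, lintegral_smul_measure, lintegral_smul_measure,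
      lintegral_map hℓ hT, smul_eq_mul, smul_eq_mul]
  calc E + ENNReal.ofReal (δ * K)
      ≤ E + (t * ∫⁻ z, marginLoss φ β (adversarialShift v M z) ∂Q + t * C) := by gcongr
    _ = ∫⁻ z, marginLoss φ β z ∂P + t * (E + C) := by
        rw [hPE]
        conv_lhs => rw [← one_mul E, ← tsub_add_cancel_of_le ht]
        ring
    _ ≤ _ := by
        gcongr
        exact le_iSup₂_of_le P hP (le_iSup_of_le hPδ le_rfl)

end MarginLoss

theorem iSup_lintegral_marginLoss_eq {ι : Type} [Fintype ι] {φ : ℝ → ℝ} {β : ι → ℝ}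
    {N : (ι → ℝ) → ℝ} {K δ : ℝ} {v : ι → ℝ} (hφ : LipschitzWith 1 φ) (hφ_ge : ∀ u, u ≤ φ u)
    (hN : ∀ (c : ℝ) x, N (c • x) = |c| * N x) (hK₀ : 0 ≤ K)
    (hK : ∀ x, |∑ k, β k * x k| ≤ K * N x) (hv : N v ≤ 1) (hKv : K ≤ ∑ k, β k * v k)
    {Q : Measure ((ι → ℝ) × ℝ)} [IsProbabilityMeasure Q] (hQ : ∀ᵐ w ∂Q, w.2 = 1 ∨ w.2 = -1)
    (hE : ∫⁻ z, marginLoss φ β z ∂Q ≠ ⊤)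
    (hC : ∫⁻ z, ENNReal.ofReal |-z.2 * ∑ k, β k * z.1 k| ∂Q ≠ ⊤) (hδ : 0 ≤ δ) :
    ⨆ (P : Measure ((ι → ℝ) × ℝ)) (_ : IsProbabilityMeasure P)
        (_ : Dc (labelCost N) P Q ≤ ENNReal.ofReal δ), ∫⁻ z, marginLoss φ β z ∂P
      = ∫⁻ z, marginLoss φ β z ∂Q + ENNReal.ofReal (δ * K) :=
  le_antisymm
    (iSup_le fun _ => iSup_le fun _ => iSup_le fun hP =>
      lintegral_marginLoss_le_of_Dc_le hφ hK₀ hK hQ hP)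
    (le_iSup_lintegral_marginLoss hφ.continuous.measurable hφ_ge hN hv hKv hQ hE hC hδ)

section Empirical
variable {E : Type} [MeasurableSpace E] {n : ℕ}

lemma isProbabilityMeasure_empirical (hn : 0 < n) (z : Fin n → E) :
    IsProbabilityMeasure ((n : ℝ≥0∞)⁻¹ • ∑ i, Measure.dirac (z i)) := by
  constructor
  simp [ENNReal.inv_mul_cancel (Nat.cast_ne_zero.2 hn.ne') (ENNReal.natCast_ne_top n)]

variable [MeasurableSingletonClass E]

lemma ae_empirical {P : E → Prop} {z : Fin n → E} (h : ∀ i, P (z i)) :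
    ∀ᵐ w ∂((n : ℝ≥0∞)⁻¹ • ∑ i, Measure.dirac (z i)), P w := by
  simp [ae_iff, Measure.dirac_apply, h]

lemma lintegral_ofReal_empirical_ne_top (hn : 0 < n) (z : Fin n → E) (g : E → ℝ) :
    ∫⁻ w, ENNReal.ofReal (g w) ∂((n : ℝ≥0∞)⁻¹ • ∑ i, Measure.dirac (z i)) ≠ ⊤ := by
  simp only [lintegral_smul_measure, lintegral_finsetSum_measure, lintegral_dirac, smul_eq_mul]
  exact ENNReal.mul_ne_top (ENNReal.inv_ne_top.2 (Nat.cast_ne_zero.2 hn.ne'))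
    (ENNReal.sum_ne_top.2 fun _ _ => ENNReal.ofReal_ne_top)

end Empirical

lemma lipschitzWith_log_one_add_exp : LipschitzWith 1 fun u : ℝ => Real.log (1 + Real.exp u) := by
  refine LipschitzWith.of_le_add fun x y => ?_
  have hexp : 1 + Real.exp x ≤ Real.exp |x - y| * (1 + Real.exp y) := by
    have h₁ : 1 ≤ Real.exp |x - y| := Real.one_le_exp (abs_nonneg _)
    have h₂ : Real.exp x ≤ Real.exp |x - y| * Real.exp y := by
      rw [← Real.exp_add]
      exact Real.exp_le_exp.2 (by linarith [le_abs_self (x - y)])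
    rw [mul_add, mul_one]
    linarith
  calc Real.log (1 + Real.exp x) ≤ Real.log (Real.exp |x - y| * (1 + Real.exp y)) :=
        Real.log_le_log (by positivity) hexp
    _ = Real.log (1 + Real.exp y) + dist x y := by
        rw [Real.log_mul (by positivity) (by positivity), Real.log_exp, Real.dist_eq]
        ring

lemma le_log_one_add_exp (u : ℝ) : u ≤ Real.log (1 + Real.exp u) :=
  (Real.le_log_iff_exp_le (by positivity)).2 (by linarith [Real.exp_pos u])

theorem statement9_general {d dbar : ℕ} {n : ℕ} (hn : 0 < n)
    (G : Fin dbar → Finset (Fin d)) (hG : IsPartition G)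
    (α : Fin dbar → ℝ) (hα : ∀ i, 0 < α i)
    (p q s t : ℝ≥0∞)
    (hpq : 1 / p + 1 / q = 1) (hst : 1 / s + 1 / t = 1)
    (X : Fin n → Fin d → ℝ) (Y : Fin n → ℝ) (hY : ∀ i, Y i = 1 ∨ Y i = -1)
    (δ : ℝ) (hδ : 0 < δ) :
    (⨅ β : Fin d → ℝ,
        ⨆ (P : Measure ((Fin d → ℝ) × ℝ)) (_ : IsProbabilityMeasure P)
          (_ : Dc
              (fun u w => if u.2 = w.2 then
                ENNReal.ofReal (gnorm G (fun i => (α i)⁻¹) q t (u.1 - w.1)) else ⊤)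
              P ((n : ℝ≥0∞)⁻¹ • ∑ i : Fin n, Measure.dirac (X i, Y i)) ≤ ENNReal.ofReal δ),
          ∫⁻ z, ENNReal.ofReal (Real.log (1 + Real.exp (- z.2 * ∑ k, β k * z.1 k))) ∂P)
      = ⨅ β : Fin d → ℝ,
          ((∫⁻ z, ENNReal.ofReal (Real.log (1 + Real.exp (- z.2 * ∑ k, β k * z.1 k)))
                ∂((n : ℝ≥0∞)⁻¹ • ∑ i : Fin n, Measure.dirac (X i, Y i)))
            + ENNReal.ofReal (δ * gnorm G α p s β)) := by
  have hpq' : p.HolderConjugate q := ENNReal.holderConjugate_iff.2 (by simpa [one_div] using hpq)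
  have hst' : s.HolderConjugate t := ENNReal.holderConjugate_iff.2 (by simpa [one_div] using hst)
  have : Fact (1 ≤ q) := ⟨hpq'.symm.one_le⟩
  have : Fact (1 ≤ s) := ⟨hst'.one_le⟩
  have : Fact (1 ≤ t) := ⟨hst'.symm.one_le⟩
  have := isProbabilityMeasure_empirical hn fun i => (X i, Y i)
  refine iInf_congr fun β => ?_
  obtain ⟨v, hv, hKv⟩ := exists_dual_vector_gnorm (p := p) (q := q) (s := s) (t := t) hG hα β
  exact iSup_lintegral_marginLoss_eq lipschitzWith_log_one_add_exp le_log_one_add_exp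
    gnorm_smul (gnorm_nonneg β) (abs_sum_mul_le_gnorm_mul_gnorm hG hα β) hv hKv
    (ae_empirical hY) (lintegral_ofReal_empirical_ne_top hn _ _)
    (lintegral_ofReal_empirical_ne_top hn _ _) hδ.le

theorem statement9 {d dbar : ℕ} (hd : 1 ≤ d) {n : ℕ} (hn : 0 < n)
    (G : Fin dbar → Finset (Fin d)) (hG : IsPartition G)
    (α : Fin dbar → ℝ) (hα : ∀ i, 0 < α i)
    (p q s t : ℝ≥0∞) (hp : 1 ≤ p) (hq : 1 ≤ q) (hs : 1 ≤ s) (ht : 1 ≤ t)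
    (hpq : 1 / p + 1 / q = 1) (hst : 1 / s + 1 / t = 1)
    (X : Fin n → Fin d → ℝ) (Y : Fin n → ℝ) (hY : ∀ i, Y i = 1 ∨ Y i = -1)
    (δ : ℝ) (hδ : 0 < δ) :
    (⨅ β : Fin d → ℝ,
        ⨆ (P : Measure ((Fin d → ℝ) × ℝ)) (_ : IsProbabilityMeasure P)
          (_ : Dc
              (fun u w => if u.2 = w.2 then
                ENNReal.ofReal (gnorm G (fun i => (α i)⁻¹) q t (u.1 - w.1)) else ⊤)
              P ((n : ℝ≥0∞)⁻¹ • ∑ i : Fin n, Measure.dirac (X i, Y i)) ≤ ENNReal.ofReal δ),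
          ∫⁻ z, ENNReal.ofReal (Real.log (1 + Real.exp (- z.2 * ∑ k, β k * z.1 k))) ∂P)
      = ⨅ β : Fin d → ℝ,
          ((∫⁻ z, ENNReal.ofReal (Real.log (1 + Real.exp (- z.2 * ∑ k, β k * z.1 k)))
                ∂((n : ℝ≥0∞)⁻¹ • ∑ i : Fin n, Measure.dirac (X i, Y i)))
            + ENNReal.ofReal (δ * gnorm G α p s β)) :=
  statement9_general hn G hG α hα p q s t hpq hst X Y hY δ hδ
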